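/- arXiv:1902.11185 — 4 statements merged into one kernel-verified Lean document; each statement's English description precedes it below -/
import Mathlib

section
/- Let n, h, f be integers with n ≥ 4 and h ≥ 0. If the cubic polynomial q(t) = t^3 + (1-n)·t^2 + (h+1-n)·t + (h+1-f) ∈ ℝ[t] has all of its roots real, then 27·f ≤ (n+2)^3. -/
/-!
Since `q(-1) = -f`, the number `f` is the product of the shifted roots `1 + x, 1 + y, 1 + z`
of `q`, which are real with sum `n + 2 ≥ 0` and second elementary symmetric function
`h + n + 2 ≥ 0`. Real numbers with both of these nonnegative and positive product are all
positive, so AM-GM bounds their product by `((n + 2) / 3) ^ 3`.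
-/

open Polynomial

theorem Polynomial.splits_of_forall_aeval_complex_im_eq_zero {q : ℝ[X]}
    (hroots : ∀ z : ℂ, aeval z q = 0 → z.im = 0) : q.Splits :=
  Splits.of_splits_map (algebraMap ℝ ℂ) (IsAlgClosed.splits _) fun z hz =>
    ⟨z.re, Complex.ext rfl (hroots z (mem_aroots.mp hz).2).symm⟩

theorem Polynomial.exists_vieta_cubic_of_forall_aeval_complex_im_eq_zero {b c d : ℝ}
    (hroots : ∀ z : ℂ, aeval z (X ^ 3 + C b * X ^ 2 + C c * X + C d) = 0 → z.im = 0) :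
    ∃ x y z : ℝ, b = -(x + y + z) ∧ c = x * y + x * z + y * z ∧ d = -(x * y * z) := by
  let P : Cubic ℝ := ⟨1, b, c, d⟩
  have hsplits : (P.toPoly.map (RingHom.id ℝ)).Splits := by
    simpa [P, Cubic.toPoly] using splits_of_forall_aeval_complex_im_eq_zero hroots
  obtain ⟨x, y, z, h3⟩ := (Cubic.splits_iff_roots_eq_three one_ne_zero).mp hsplits
  refine ⟨x, y, z, ?_, ?_, ?_⟩
  · simpa [P] using Cubic.b_eq_three_roots one_ne_zero h3
  · simpa [P] using Cubic.c_eq_three_roots one_ne_zero h3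
  · simpa [P] using Cubic.d_eq_three_roots one_ne_zero h3

namespace Real

variable {x y z : ℝ}

theorem pos_of_esymm_nonneg_of_mul_mul_pos (hs : 0 ≤ x + y + z)
    (hp : 0 ≤ x * y + y * z + z * x) (hr : 0 < x * y * z) : 0 < x := by
  by_contra! hx
  -- `x` is a root of `t ^ 3 - s t ^ 2 + p t - r`, which is negative for `t ≤ 0`.
  have hcubic : x ^ 3 - (x + y + z) * x ^ 2 + (x * y + y * z + z * x) * x = x * y * z := by ring
  nlinarith [mul_nonneg hs (sq_nonneg x), mul_nonpos_of_nonneg_of_nonpos hp hx,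
    mul_nonpos_of_nonpos_of_nonneg hx (sq_nonneg x)]

theorem twenty_seven_mul_le_add_pow_three_of_nonneg (hx : 0 ≤ x) (hy : 0 ≤ y) (hz : 0 ≤ z) :
    27 * (x * y * z) ≤ (x + y + z) ^ 3 := by
  nlinarith [mul_nonneg hz (sq_nonneg (x - y)), mul_nonneg hx (sq_nonneg (y - z)),
    mul_nonneg hy (sq_nonneg (x - z)), mul_nonneg (mul_nonneg hx hy) hz]

theorem twenty_seven_mul_le_add_pow_three_of_esymm_nonneg (hs : 0 ≤ x + y + z)
    (hp : 0 ≤ x * y + y * z + z * x) : 27 * (x * y * z) ≤ (x + y + z) ^ 3 := by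
  rcases le_or_gt (x * y * z) 0 with hr | hr
  · nlinarith [pow_nonneg hs 3]
  have hx := pos_of_esymm_nonneg_of_mul_mul_pos hs hp hr
  have hy := pos_of_esymm_nonneg_of_mul_mul_pos (x := y) (y := z) (z := x)
    (by linarith) (by linarith) (by linarith)
  have hz := pos_of_esymm_nonneg_of_mul_mul_pos (x := z) (y := x) (z := y)
    (by linarith) (by linarith) (by linarith)
  exact twenty_seven_mul_le_add_pow_three_of_nonneg hx.le hy.le hz.le

end Real

/-- Corollary 2(i): if `n ≥ 4`, `h ≥ 0` and the cubic
`q(t) = t^3 + (1-n)t^2 + (h+1-n)t + (h+1-f)` has all roots real,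
then `27f ≤ (n+2)^3`. -/
theorem stmt_2 (n h f : ℤ) (hn : 4 ≤ n) (hh : 0 ≤ h)
    (q : Polynomial ℝ)
    (hq : q = X ^ 3 + C (1 - (n : ℝ)) * X ^ 2 + C ((h : ℝ) + 1 - (n : ℝ)) * X
      + C ((h : ℝ) + 1 - (f : ℝ)))
    (hroots : ∀ z : ℂ, aeval z q = 0 → z.im = 0) :
    27 * f ≤ (n + 2) ^ 3 := by
  subst hq
  obtain ⟨x, y, z, hb, hc, hd⟩ := exists_vieta_cubic_of_forall_aeval_complex_im_eq_zero hroots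
  have hf : (f : ℝ) = (1 + x) * (1 + y) * (1 + z) := by linear_combination -hb + hc - hd
  have hn' : (4 : ℝ) ≤ n := by exact_mod_cast hn
  have hh' : (0 : ℝ) ≤ h := by exact_mod_cast hh
  have hamgm := Real.twenty_seven_mul_le_add_pow_three_of_esymm_nonneg (x := 1 + x) (y := 1 + y)
    (z := 1 + z) (by linarith) (by linarith)
  have hreal : (27 : ℝ) * f ≤ (n + 2) ^ 3 := by
    rw [hf]
    convert hamgm using 2
    linarith
  exact_mod_cast hreal
end

section
/- Fix a real number n ≥ 4 and define φ_n(x) := (9n+18)·x + 20 + 12n + 2·√((n^2+n-2-3x)^3) - 2n^3 - 3n^2, where √ denotes the real square root. Then for every real x with 0 < x ≤ (n^2+n-2)/3 one has φ_n(x) ≤ (n+2)^3, and φ_n attains this value at x̄ = (n^2+n-2)/3, i.e. φ_n(x̄) = (n+2)^3. -/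
/-!
Writing `t = n² + n - 2 - 3x ≥ 0`, the function becomes
`φ_n(x) = (n + 2)³ + t (2√t - 3(n + 2))`, so `φ_n(x) ≤ (n + 2)³` as soon as `√t ≤ 3(n + 2)/2`,
which holds because `t ≤ n² + n - 2 < (3(n + 2)/2)²`; at `x̄` one has `t = 0`.
-/

lemma Real.sqrt_pow_three {t : ℝ} (ht : 0 ≤ t) : √(t ^ 3) = t * √t := by
  rw [pow_succ, Real.sqrt_mul (sq_nonneg t), Real.sqrt_sq ht]

lemma phi_eq_cube_add (n x : ℝ) (ht : 0 ≤ n ^ 2 + n - 2 - 3 * x) :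
    (9 * n + 18) * x + 20 + 12 * n + 2 * √((n ^ 2 + n - 2 - 3 * x) ^ 3) - 2 * n ^ 3 - 3 * n ^ 2
      = (n + 2) ^ 3 + (n ^ 2 + n - 2 - 3 * x) * (2 * √(n ^ 2 + n - 2 - 3 * x) - 3 * (n + 2)) := by
  rw [Real.sqrt_pow_three ht]
  ring

/-- Maximization lemma for Corollary 2(i): for fixed real `n ≥ 4`, the function
`φ_n(x) = (9n+18)x + 20 + 12n + 2√((n^2+n-2-3x)^3) - 2n^3 - 3n^2` satisfies
`φ_n(x) ≤ (n+2)^3` for `0 < x ≤ (n^2+n-2)/3`, with equality at the right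
endpoint `x̄ = (n^2+n-2)/3`. -/
theorem stmt_3 (n : ℝ) (hn : 4 ≤ n) (φ : ℝ → ℝ)
    (hφ : ∀ x, φ x = (9 * n + 18) * x + 20 + 12 * n
      + 2 * Real.sqrt ((n ^ 2 + n - 2 - 3 * x) ^ 3) - 2 * n ^ 3 - 3 * n ^ 2) :
    (∀ x : ℝ, 0 < x → x ≤ (n ^ 2 + n - 2) / 3 → φ x ≤ (n + 2) ^ 3) ∧
      φ ((n ^ 2 + n - 2) / 3) = (n + 2) ^ 3 := by
  constructor
  · intro x hx0 hx
    have ht : 0 ≤ n ^ 2 + n - 2 - 3 * x := by linarith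
    have hsqrt : √(n ^ 2 + n - 2 - 3 * x) ≤ 3 * (n + 2) / 2 :=
      (Real.sqrt_le_left (by linarith)).2 (by nlinarith)
    have hcorr : (n ^ 2 + n - 2 - 3 * x) * (2 * √(n ^ 2 + n - 2 - 3 * x) - 3 * (n + 2)) ≤ 0 :=
      mul_nonpos_of_nonneg_of_nonpos ht (by linarith)
    rw [hφ, phi_eq_cube_add n x ht]
    linarith
  · have ht : n ^ 2 + n - 2 - 3 * ((n ^ 2 + n - 2) / 3) = 0 := by ring
    rw [hφ, phi_eq_cube_add n _ ht.ge, ht, zero_mul, add_zero]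
end

section
/- Let n, h, S be integers with n ≥ 4, h ≥ 0, and set D := n^2 + n - 2 - 3h and f := S - n. If the cubic polynomial q(t) = t^3 + (1-n)·t^2 + (h+1-n)·t + (h+1-f) ∈ ℝ[t] has all of its roots real, then (i) 27·S ≤ (n+2)^3 + 27n, (ii) 27·S ≤ (9n+18)h + 20 + 39n - 2n^3 - 3n^2 + 2·√(D^3), and (iii) 27·S ≥ (9n+18)h + 20 + 39n - 2n^3 - 3n^2 - 2·√(D^3), where √ denotes the real square root. -/
open Polynomial

/-!
A real cubic whose roots are all real has nonnegative discriminant; for a monic cubic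
`X³ + a X² + b X + c` this reads `(2a³ - 9ab + 27c)² ≤ 4 (a² - 3b)³`. For `q` one has
`a² - 3b = D` and `2a³ - 9ab + 27c = R - 27 S`, with `R` the polynomial in `n, h` appearing in
(ii) and (iii); hence `|R - 27 S| ≤ 2 √(D³)`, which is (ii) and (iii). Since `4 D ≤ (3n + 6)²`,
also `2 √(D³) ≤ (3n + 6) D`, and (i) follows from `R + (3n + 6) D = (n + 2)³ + 27 n`.
-/

namespace Cubic

theorem discr_nonneg_of_forall_aeval_eq_zero_im_eq_zero (P : Cubic ℝ) (ha : P.a ≠ 0)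
    (hreal : ∀ z : ℂ, aeval z P.toPoly = 0 → z.im = 0) : 0 ≤ P.discr := by
  obtain ⟨x, y, z, h3⟩ :=
    (splits_iff_roots_eq_three (φ := Complex.ofRealHom) ha).mp (IsAlgClosed.splits _)
  have hre : ∀ w ∈ (map Complex.ofRealHom P).roots, (w.re : ℂ) = w := fun w hw ↦ by
    rw [map_roots, mem_roots_map (ne_zero_of_a_ne_zero ha)] at hw
    exact Complex.ext rfl (hreal w hw).symm
  have hdiscr := discr_eq_prod_three_roots ha h3
  rw [← hre x (by simp [h3]), ← hre y (by simp [h3]), ← hre z (by simp [h3])] at hdiscr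
  have : P.discr = (P.a * P.a * (x.re - y.re) * (x.re - z.re) * (y.re - z.re)) ^ 2 := by
    simp only [Complex.ofRealHom_eq_coe] at hdiscr
    exact_mod_cast hdiscr
  exact this ▸ sq_nonneg _

theorem sq_le_of_discr_nonneg {R : Type*} [CommRing R] [LinearOrder R] [IsStrictOrderedRing R]
    {P : Cubic R} (ha : P.a = 1) (hd : 0 ≤ P.discr) :
    (2 * P.b ^ 3 - 9 * P.b * P.c + 27 * P.d) ^ 2 ≤ 4 * (P.b ^ 2 - 3 * P.c) ^ 3 := by
  have : 4 * (P.b ^ 2 - 3 * P.c) ^ 3 - (2 * P.b ^ 3 - 9 * P.b * P.c + 27 * P.d) ^ 2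
      = 27 * P.discr := by
    simp only [discr, ha]; ring
  linarith

end Cubic

theorem abs_le_two_mul_sqrt_of_sq_le {u v : ℝ} (h : u ^ 2 ≤ 4 * v) : |u| ≤ 2 * √v := by
  have h4 : √4 = 2 := by
    rw [show (4 : ℝ) = 2 ^ 2 by norm_num, Real.sqrt_sq zero_le_two]
  simpa [Real.sqrt_mul zero_le_four, h4] using Real.abs_le_sqrt h

theorem two_mul_sqrt_pow_three_le {D m : ℝ} (hD : 0 ≤ D) (hm : 0 ≤ m) (hDm : 4 * D ≤ m ^ 2) :
    2 * √(D ^ 3) ≤ m * D := by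
  have : √(D ^ 3) ≤ m * D / 2 := by
    rw [Real.sqrt_le_left (by positivity)]
    nlinarith [mul_le_mul_of_nonneg_left hDm (sq_nonneg D)]
  linarith

/-- Corollary 3, arithmetic content: with `n ≥ 4`, `h ≥ 0`,
`D := n^2+n-2-3h` and `f := S - n`, if the cubic
`q(t) = t^3 + (1-n)t^2 + (h+1-n)t + (h+1-f)` has all roots real, then
`27S ≤ (n+2)^3 + 27n`, together with the displayed upper and lower bounds. -/
theorem stmt_6 (n h S : ℤ) (hn : 4 ≤ n) (hh : 0 ≤ h)
    (D f : ℤ) (hD : D = n ^ 2 + n - 2 - 3 * h) (hf : f = S - n)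
    (q : Polynomial ℝ)
    (hq : q = X ^ 3 + C (1 - (n : ℝ)) * X ^ 2 + C ((h : ℝ) + 1 - (n : ℝ)) * X
      + C ((h : ℝ) + 1 - (f : ℝ)))
    (hroots : ∀ z : ℂ, aeval z q = 0 → z.im = 0) :
    27 * S ≤ (n + 2) ^ 3 + 27 * n ∧
      (27 * S : ℝ) ≤ (9 * n + 18) * h + 20 + 39 * n - 2 * n ^ 3 - 3 * n ^ 2
        + 2 * Real.sqrt ((D : ℝ) ^ 3) ∧
      (27 * S : ℝ) ≥ (9 * n + 18) * h + 20 + 39 * n - 2 * n ^ 3 - 3 * n ^ 2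
        - 2 * Real.sqrt ((D : ℝ) ^ 3) := by
  set R : ℝ := (9 * n + 18) * h + 20 + 39 * n - 2 * n ^ 3 - 3 * n ^ 2 with hR
  let P : Cubic ℝ := ⟨1, 1 - n, h + 1 - n, h + 1 - f⟩
  have hPq : P.toPoly = q := by rw [hq]; simp [P, Cubic.toPoly]
  have hdiscr := P.discr_nonneg_of_forall_aeval_eq_zero_im_eq_zero one_ne_zero (hPq ▸ hroots)
  have hDP : (D : ℝ) = P.b ^ 2 - 3 * P.c := by simp only [P, hD]; push_cast; ring
  have hRP : R - 27 * S = 2 * P.b ^ 3 - 9 * P.b * P.c + 27 * P.d := by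
    simp only [P, hR, hf]; push_cast; ring
  have hsq : (R - 27 * S) ^ 2 ≤ 4 * (D : ℝ) ^ 3 :=
    hDP ▸ hRP ▸ Cubic.sq_le_of_discr_nonneg rfl hdiscr
  have hD0 : (0 : ℝ) ≤ D :=
    (Odd.pow_nonneg_iff (by decide : Odd 3)).mp (by nlinarith [sq_nonneg (R - 27 * S)])
  obtain ⟨hlower, hupper⟩ := abs_le.mp (abs_le_two_mul_sqrt_of_sq_le hsq)
  have hn' : (4 : ℝ) ≤ n := by exact_mod_cast hn
  have hh' : (0 : ℝ) ≤ h := by exact_mod_cast hh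
  have hsqrt : 2 * √((D : ℝ) ^ 3) ≤ (3 * n + 6) * D :=
    two_mul_sqrt_pow_three_le hD0 (by linarith) (by rw [hD]; push_cast; nlinarith)
  have hidentity : R + (3 * n + 6) * D = ((n + 2) ^ 3 + 27 * n : ℤ) := by
    rw [hR, hD]; push_cast; ring
  refine ⟨?_, by linarith, by linarith⟩
  exact_mod_cast (by linarith : (27 * S : ℝ) ≤ ((n + 2) ^ 3 + 27 * n : ℤ))
end

section
/- Let n, h2, f be integers with 0 ≤ h2 ≤ 2n - 2 and suppose 3 divides n^2 - n + h2; set h := (n^2 - n + h2)/3. If the cubic polynomial q(t) = t^3 + (1-n)·t^2 + (h+1-n)·t + (h+1-f) ∈ ℝ[t] has all of its roots real, then 27·f ≥ n^3 + 6n + 20 + 3·h2·(n+2) - 2·√((2n-2-h2)^3) and 27·f ≤ (n+2)^3, where √ denotes the real square root. -/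
/-!
Let `a, b, c` be the (real) roots of `q`. By Vieta, `a + b + c = n - 1`, `ab + ac + bc = h + 1 - n`
and `abc = f - h - 1`, so with `3h = n² - n + h2` one gets
`(a + b + c)² - 3(ab + ac + bc) = D := 2n - 2 - h2` and
`2(a + b + c)³ - 9(a + b + c)(ab + ac + bc) + 27abc = 27f - (n³ + 6n + 20 + 3 h2 (n + 2))`.
The left side of the latter is `27` times the product of the centred roots `a - (a + b + c)/3`, …,
and the identity `(2e₁³ - 9e₁e₂ + 27e₃)² + 27 ((a - b)(a - c)(b - c))² = 4 (e₁² - 3e₂)³`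
bounds it in absolute value by `2√(D³)`. This is the lower bound; the upper bound follows since
`(n + 2)³ = n³ + 6n + 20 + 3 h2 (n + 2) + 3 (n + 2) D` and `√(D³) ≤ 3 (n + 2) D / 2`.
-/

open Polynomial

theorem Polynomial.splits_of_forall_aeval_complex_eq_zero_im_eq_zero {p : ℝ[X]}
    (h : ∀ z : ℂ, aeval z p = 0 → z.im = 0) : p.Splits := by
  refine Splits.of_splits_map_of_injective (algebraMap ℝ ℂ).injective (IsAlgClosed.splits _)
    fun z hz => ⟨z.re, Complex.ext rfl ?_⟩
  rw [mem_roots', IsRoot, eval_map_algebraMap] at hz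
  simp [h z hz.2]

theorem Polynomial.Splits.exists_eq_X_sub_C_mul_X_sub_C_mul_X_sub_C {R : Type*} [CommRing R]
    [IsDomain R] {p : R[X]} (hp : p.Splits) (hm : p.Monic) (hdeg : p.natDegree = 3) :
    ∃ a b c : R, p = (X - C a) * (X - C b) * (X - C c) := by
  obtain ⟨a, b, c, habc⟩ := Multiset.card_eq_three.mp (hdeg ▸ hp.natDegree_eq_card_roots).symm
  refine ⟨a, b, c, ?_⟩
  rw [hp.eq_prod_roots_of_monic hm, habc]
  simp [mul_assoc]

theorem Polynomial.vieta_cubic {R : Type*} [CommRing R] {p r s a b c : R}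
    (h : X ^ 3 + C p * X ^ 2 + C r * X + C s = (X - C a) * (X - C b) * (X - C c)) :
    a + b + c = -p ∧ a * b + a * c + b * c = r ∧ a * b * c = -s := by
  have hexp : (X - C a) * (X - C b) * (X - C c) =
      X ^ 3 + C (-(a + b + c)) * X ^ 2 + C (a * b + a * c + b * c) * X + C (-(a * b * c)) := by
    simp only [map_neg, map_add, map_mul]; ring
  rw [hexp] at h
  have h2 := congrArg (coeff · 2) h
  have h1 := congrArg (coeff · 1) h
  have h0 := congrArg (coeff · 0) h
  simp only [coeff_add, coeff_C_mul, coeff_X_pow, coeff_X, coeff_C] at h2 h1 h0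
  norm_num at h2 h1 h0
  exact ⟨by rw [h2]; ring, h1.symm, by rw [h0, neg_neg]⟩

theorem cubic_resolvent_sq_add_discr (a b c : ℝ) :
    (2 * (a + b + c) ^ 3 - 9 * (a + b + c) * (a * b + a * c + b * c) + 27 * (a * b * c)) ^ 2
      + 27 * ((a - b) * (a - c) * (b - c)) ^ 2
      = 4 * ((a + b + c) ^ 2 - 3 * (a * b + a * c + b * c)) ^ 3 := by
  ring

theorem abs_cubic_resolvent_le (a b c : ℝ) :
    |2 * (a + b + c) ^ 3 - 9 * (a + b + c) * (a * b + a * c + b * c) + 27 * (a * b * c)|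
      ≤ 2 * √(((a + b + c) ^ 2 - 3 * (a * b + a * c + b * c)) ^ 3) := by
  have h := Real.abs_le_sqrt (le_of_add_le_of_nonneg_left (cubic_resolvent_sq_add_discr a b c).le
    (by positivity))
  rwa [Real.sqrt_mul zero_le_four, show √(4 : ℝ) = 2 by norm_num] at h

theorem Real.sqrt_pow_three_le_mul {d c : ℝ} (hd : 0 ≤ d) (hc : 0 ≤ c) (h : d ≤ c ^ 2) :
    √(d ^ 3) ≤ c * d := by
  rw [pow_succ, Real.sqrt_mul (by positivity), Real.sqrt_sq hd, mul_comm]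
  exact mul_le_mul_of_nonneg_right (Real.sqrt_le_iff.mpr ⟨hc, h⟩) hd

/-- Inequality (5) of Theorem 3(i): with `0 ≤ h2 ≤ 2n-2`, `3 ∣ n^2 - n + h2`
and `h := (n^2 - n + h2)/3`, if the cubic
`q(t) = t^3 + (1-n)t^2 + (h+1-n)t + (h+1-f)` has all roots real, then
`27f ≥ n^3 + 6n + 20 + 3h2(n+2) - 2√((2n-2-h2)^3)` and `27f ≤ (n+2)^3`. -/
theorem stmt_8 (n h2 f h : ℤ) (hh2 : 0 ≤ h2) (hh2' : h2 ≤ 2 * n - 2)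
    (hdvd : 3 ∣ n ^ 2 - n + h2) (hh : h = (n ^ 2 - n + h2) / 3)
    (q : Polynomial ℝ)
    (hq : q = X ^ 3 + C (1 - (n : ℝ)) * X ^ 2 + C ((h : ℝ) + 1 - (n : ℝ)) * X
      + C ((h : ℝ) + 1 - (f : ℝ)))
    (hroots : ∀ z : ℂ, aeval z q = 0 → z.im = 0) :
    (27 * f : ℝ) ≥ (n : ℝ) ^ 3 + 6 * n + 20 + 3 * h2 * (n + 2)
      - 2 * Real.sqrt ((2 * (n : ℝ) - 2 - h2) ^ 3) ∧
    27 * f ≤ (n + 2) ^ 3 := by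
  have h3 : (3 * h : ℝ) = n ^ 2 - n + h2 := by
    exact_mod_cast hh ▸ Int.mul_ediv_cancel' hdvd
  have hmonic : q.Monic := by rw [hq]; monicity!
  have hdeg : q.natDegree = 3 := by rw [hq]; compute_degree!
  obtain ⟨a, b, c, hfactor⟩ := (splits_of_forall_aeval_complex_eq_zero_im_eq_zero hroots)
    |>.exists_eq_X_sub_C_mul_X_sub_C_mul_X_sub_C hmonic hdeg
  obtain ⟨he1, he2, he3⟩ := vieta_cubic (hq ▸ hfactor)
  have hdisc : (a + b + c) ^ 2 - 3 * (a * b + a * c + b * c) = 2 * n - 2 - h2 := by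
    rw [he1, he2]; linear_combination -h3
  have hresolvent : 2 * (a + b + c) ^ 3 - 9 * (a + b + c) * (a * b + a * c + b * c)
      + 27 * (a * b * c) = 27 * f - (n ^ 3 + 6 * n + 20 + 3 * h2 * (n + 2)) := by
    rw [he1, he2, he3]; linear_combination (-3 * (n + 2) : ℝ) * h3
  have hbound := abs_cubic_resolvent_le a b c
  rw [hdisc, hresolvent] at hbound
  obtain ⟨hlower, hupper⟩ := abs_le.mp hbound
  have hn : (1 : ℝ) ≤ n := by exact_mod_cast (by omega : 1 ≤ n)
  have hsqrt : √((2 * n - 2 - h2 : ℝ) ^ 3) ≤ 3 * (n + 2) / 2 * (2 * n - 2 - h2) :=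
    Real.sqrt_pow_three_le_mul (by norm_cast; omega) (by positivity)
      (by nlinarith [(Int.cast_nonneg hh2 : (0 : ℝ) ≤ h2)])
  refine ⟨by linarith, ?_⟩
  exact_mod_cast (by linarith : (27 * f : ℝ) ≤ (n + 2) ^ 3)
end
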